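/- Let H be the subgroup of the symmetric group on {1,…,14} generated by (1,6,4)(2,12,3)(5,10,9)(8,13,11) and (1,12,6)(3,7,4)(5,13,8)(10,14,11). Then (i) H has a normal subgroup P whose order is a power of 7 such that the quotient H/P is cyclic, and (ii) the orbits of H on {1,…,14} are exactly the two 7-element sets {1,2,3,4,6,7,12} and {5,8,9,10,11,13,14}. -/

import Mathlib

attribute [local instance] Classical.propDecidable

/-- `H = ⟨(1,6,4)(2,12,3)(5,10,9)(8,13,11), (1,12,6)(3,7,4)(5,13,8)(10,14,11)⟩`
(the subgroup `G₆¹⁰` of the paper). -/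
def H : Subgroup (Equiv.Perm (Fin 14)) :=
  Subgroup.closure {c[1,6,4] * c[2,12,3] * c[5,10,9] * c[8,13,11],
    c[1,12,6] * c[3,7,4] * c[5,13,8] * c[10,14,11]}

/-- The orbit of a point `x` under a subgroup `G` of permutations, as a finite set. -/
noncomputable def orbitFinset (G : Subgroup (Equiv.Perm (Fin 14))) (x : Fin 14) :
    Finset (Fin 14) :=
  Finset.univ.filter fun y => ∃ σ ∈ G, σ x = y

/-!
The element `rot = genA * genB⁻¹` of `H` has order `7` and acts as a `7`-cycle on each of the
two sets. Both generators conjugate `rot` to `rot ^ 2`, so `⟨rot⟩` is normal in `H`, and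
`genB = genA * rot ^ 3`, so `H / ⟨rot⟩` is generated by the image of `genA`. The two sets are
invariant under both generators, and the powers of `rot` are transitive on each of them.
-/

set_option maxRecDepth 20000

open Subgroup Pointwise

section

variable {G : Type*} [Group G]

theorem mem_normalizer_zpowers_of_conj_mem [Finite G] {g c : G}
    (h : g * c * g⁻¹ ∈ zpowers c) : g ∈ normalizer (zpowers c : Set G) :=
  mem_normalizer_fintype fun _ ⟨k, hk⟩ => hk ▸ conj_zpow (a := g) ▸ zpow_mem h k

theorem isCyclic_quotient_of_closure_eq {S : Set G} {K : Subgroup G} (hS : closure S = K)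
    (N : Subgroup K) [N.Normal] (a : K) (h : ∀ s ∈ S, ∃ n ∈ N, ((a * n : K) : G) = s) :
    IsCyclic (K ⧸ N) := by
  subst hS
  refine isCyclic_iff_exists_zpowers_eq_top.2 ⟨a, eq_top_iff.2 ?_⟩
  rw [← map_top_of_surjective _ (QuotientGroup.mk'_surjective N), ← closure_closure_coe_preimage,
    MonoidHom.map_closure, closure_le]
  rintro _ ⟨s, hs, rfl⟩
  obtain ⟨n, hn, hans⟩ := h s hs
  rw [SetLike.mem_coe, QuotientGroup.mk'_apply, ← Subtype.ext hans, QuotientGroup.mk_mul,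
    (QuotientGroup.eq_one_iff n).2 hn, mul_one]
  exact mem_zpowers _

end

theorem orbitFinset_eq_of_le_stabilizer {G : Subgroup (Equiv.Perm (Fin 14))}
    {S : Finset (Fin 14)} {x : Fin 14} (hG : G ≤ MulAction.stabilizer _ S) (hx : x ∈ S)
    (htrans : ∀ y ∈ S, ∃ σ ∈ G, σ x = y) : orbitFinset G x = S := by
  ext y
  simp only [orbitFinset, Finset.mem_filter, Finset.mem_univ, true_and]
  refine ⟨?_, htrans y⟩
  rintro ⟨σ, hσ, rfl⟩
  rw [← MulAction.mem_stabilizer_iff.1 (hG hσ)]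
  exact Finset.smul_mem_smul_finset hx

local notation "O₁" => ({1, 2, 3, 4, 6, 7, 12} : Finset (Fin 14))
local notation "O₂" => ({5, 8, 9, 10, 11, 13, 14} : Finset (Fin 14))

def genA : Equiv.Perm (Fin 14) := c[1,6,4] * c[2,12,3] * c[5,10,9] * c[8,13,11]

def genB : Equiv.Perm (Fin 14) := c[1,12,6] * c[3,7,4] * c[5,13,8] * c[10,14,11]

def rot : Equiv.Perm (Fin 14) := genA * genB⁻¹

theorem H_eq_closure : H = closure {genA, genB} := rfl

theorem genA_mem_H : genA ∈ H := subset_closure (Set.mem_insert _ _)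

theorem genB_mem_H : genB ∈ H := subset_closure (Set.mem_insert_of_mem _ rfl)

theorem rot_mem_H : rot ∈ H := mul_mem genA_mem_H (inv_mem genB_mem_H)

theorem orderOf_rot : orderOf rot = 7 :=
  haveI : Fact (Nat.Prime 7) := ⟨by norm_num⟩
  orderOf_eq_prime (by decide) (by decide)

theorem H_le_normalizer_zpowers_rot :
    H ≤ normalizer (zpowers rot : Set (Equiv.Perm (Fin 14))) := by
  rw [H_eq_closure, closure_le]
  rintro σ (rfl | rfl) <;> exact mem_normalizer_zpowers_of_conj_mem ⟨2, by decide⟩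

theorem genA_mul_rot_pow_three : genA * rot ^ 3 = genB := by decide

theorem H_le_stabilizer {S : Finset (Fin 14)} (hA : genA • S = S) (hB : genB • S = S) :
    H ≤ MulAction.stabilizer _ S := by
  rw [H_eq_closure, closure_le]
  rintro σ (rfl | rfl)
  exacts [MulAction.mem_stabilizer_iff.2 hA, MulAction.mem_stabilizer_iff.2 hB]

theorem orbitFinset_H_eq_of_rot_transitive {S : Finset (Fin 14)} (hA : genA • S = S)
    (hB : genB • S = S) (htrans : ∀ x ∈ S, ∀ y ∈ S, ∃ k : Fin 7, (rot ^ (k : ℕ)) x = y)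
    {x : Fin 14} (hx : x ∈ S) : orbitFinset H x = S := by
  refine orbitFinset_eq_of_le_stabilizer (H_le_stabilizer hA hB) hx fun y hy => ?_
  obtain ⟨k, hk⟩ := htrans x hx y hy
  exact ⟨_, pow_mem rot_mem_H _, hk⟩

theorem orbitFinset_H_of_mem_O₁ {x : Fin 14} (hx : x ∈ O₁) : orbitFinset H x = O₁ :=
  orbitFinset_H_eq_of_rot_transitive (by decide) (by decide) (by decide) hx

theorem orbitFinset_H_of_mem_O₂ {x : Fin 14} (hx : x ∈ O₂) : orbitFinset H x = O₂ :=
  orbitFinset_H_eq_of_rot_transitive (by decide) (by decide) (by decide) hx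

/-- (i) `H` has a normal subgroup `P` of `7`-power order with cyclic
quotient `H / P`, and (ii) the orbits of `H` on `{1,…,14}` are exactly the two `7`-element
sets `{1,2,3,4,6,7,12}` and `{5,8,9,10,11,13,14}`. -/
theorem H_Psi₇_and_two_orbits :
    (∃ P : Subgroup H, ∃ hP : P.Normal, (∃ m : ℕ, Nat.card P = 7 ^ m) ∧
      (letI := hP; IsCyclic (H ⧸ P))) ∧
    (∀ x : Fin 14,
        orbitFinset H x = ({1, 2, 3, 4, 6, 7, 12} : Finset (Fin 14)) ∨
        orbitFinset H x = ({5, 8, 9, 10, 11, 13, 14} : Finset (Fin 14))) ∧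
    (∃ x : Fin 14, orbitFinset H x = ({1, 2, 3, 4, 6, 7, 12} : Finset (Fin 14))) ∧
    (∃ x : Fin 14, orbitFinset H x = ({5, 8, 9, 10, 11, 13, 14} : Finset (Fin 14))) := by
  have hnormal := normal_subgroupOf_of_le_normalizer H_le_normalizer_zpowers_rot
  refine ⟨⟨_, hnormal, ⟨1, ?_⟩, ?_⟩, fun x => ?_,
    ⟨1, orbitFinset_H_of_mem_O₁ (by decide)⟩, ⟨5, orbitFinset_H_of_mem_O₂ (by decide)⟩⟩
  · rw [Nat.card_congr (subgroupOfEquivOfLe (zpowers_le.2 rot_mem_H)).toEquiv, Nat.card_zpowers,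
      orderOf_rot, pow_one]
  · refine isCyclic_quotient_of_closure_eq H_eq_closure.symm _ ⟨genA, genA_mem_H⟩ ?_
    rintro s (rfl | rfl)
    · exact ⟨1, one_mem _, mul_one _⟩
    · exact ⟨⟨rot ^ 3, pow_mem rot_mem_H 3⟩, mem_subgroupOf.2 (pow_mem (mem_zpowers rot) 3),
        genA_mul_rot_pow_three⟩
  · have hcover : x ∈ O₁ ∨ x ∈ O₂ := by revert x; decide
    exact hcover.imp orbitFinset_H_of_mem_O₁ orbitFinset_H_of_mem_O₂
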